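/- Assume Δ = 0 and γ ≠ 4. Then for every λ ∈ K: (i) if τ(λ·c₂) ∈ G then τ(λ·c₁) ∈ G; (ii) if τ(λ·c₃) ∈ G then τ(λ·c₁) ∈ G; (iii) if τ(λ·c₁) ∈ G then τ(αλ·c₂) ∈ G and τ(βλ·c₃) ∈ G; (iv) if τ(λ·c₂) ∈ G then τ(lλ·c₃) ∈ G; (v) if τ(λ·c₃) ∈ G then τ(mλ·c₂) ∈ G. -/

import Mathlib

noncomputable section

variable {K : Type*} [Field K] [CharZero K]

/-- The linear functional `x ↦ c 0 * x 0 + c 1 * x 1 + c 2 * x 2` on `K³`. -/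
def lf (c : Fin 3 → K) : (Fin 3 → K) →ₗ[K] K :=
  c 0 • LinearMap.proj 0 + c 1 • LinearMap.proj 1 + c 2 • LinearMap.proj 2

/-- `s₁ : x ↦ x − (2x₁ − α x₂ − β x₃)·a₁` where `a₁ = Pi.single 0 1`. -/
def s1 (α β : K) : Module.End K (Fin 3 → K) :=
  LinearMap.id - (lf ![2, -α, -β]).smulRight (Pi.single 0 1)

/-- `s₂ : x ↦ x − (−x₁ + 2x₂ − l·x₃)·a₂`. -/
def s2 (l : K) : Module.End K (Fin 3 → K) :=
  LinearMap.id - (lf ![-1, 2, -l]).smulRight (Pi.single 1 1)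

/-- `s₃ : x ↦ x − (−x₁ − m·x₂ + 2x₃)·a₃`. -/
def s3 (m : K) : Module.End K (Fin 3 → K) :=
  LinearMap.id - (lf ![-1, -m, 2]).smulRight (Pi.single 2 1)

/-- `b = b₁ = (4−γ)a₁ + (l+2)a₂ + (m+2)a₃`, with `γ = l·m`. -/
def bvec (l m : K) : Fin 3 → K := ![4 - l * m, l + 2, m + 2]

/-- `b₂ = (2α+βm)a₁ + (4−β)a₂ + (α+2m)a₃`. -/
def b2vec (α β l m : K) : Fin 3 → K := ![2*α + β*m, 4 - β, α + 2*m]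

/-- `b₃ = (2β+αl)a₁ + (β+2l)a₂ + (4−α)a₃`. -/
def b3vec (α β l m : K) : Fin 3 → K := ![2*β + α*l, β + 2*l, 4 - α]

/-- `τ(λ,μ) : a₁ ↦ a₁ + ω·b, a₂ ↦ a₂ + λ·b, a₃ ↦ a₃ + μ·b`,
where `ω = −(λ(l+2) + μ(m+2))/(4−γ)`. -/
def tau (l m lam mu : K) : Module.End K (Fin 3 → K) :=
  LinearMap.id +
    (lf ![-(lam*(l+2) + mu*(m+2))/(4 - l*m), lam, mu]).smulRight (bvec l m)

/-- `τ` applied to a vector `(λ,μ) ∈ K²`. -/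
def tauv (l m : K) (v : K × K) : Module.End K (Fin 3 → K) := tau l m v.1 v.2

def c1 (α β : K) : K × K := (α, β)
def c2 (l : K) : K × K := (-2, l)
def c3 (m : K) : K × K := (m, -2)

/-- `z₁ : a₁ ↦ −a₁ + (2/(4−γ))·b, a₂ ↦ −a₂, a₃ ↦ −a₃`. -/
def z1 (l m : K) : Module.End K (Fin 3 → K) :=
  -LinearMap.id + (lf ![2/(4 - l*m), 0, 0]).smulRight (bvec l m)

/-- `z₂ : a₂ ↦ −a₂ + (2/(l+2))·b, a₁ ↦ −a₁, a₃ ↦ −a₃`. -/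
def z2 (l m : K) : Module.End K (Fin 3 → K) :=
  -LinearMap.id + (lf ![0, 2/(l+2), 0]).smulRight (bvec l m)

/-- `z₃ : a₃ ↦ −a₃ + (2/(m+2))·b, a₁ ↦ −a₁, a₂ ↦ −a₂`. -/
def z3 (l m : K) : Module.End K (Fin 3 → K) :=
  -LinearMap.id + (lf ![0, 0, 2/(m+2)]).smulRight (bvec l m)

/-- The linear functional `(λ,μ) ↦ c.1·λ + c.2·μ` on `K²`. -/
def lf2 (c : K × K) : (K × K) →ₗ[K] K := c.1 • LinearMap.fst K K K + c.2 • LinearMap.snd K K K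

/-- `σ₁(λ,μ) = (λ,μ) − ((λ(l+2)+μ(m+2))/(4−γ))·(α,β)`. -/
def sigma1 (α β l m : K) : Module.End K (K × K) :=
  LinearMap.id - (lf2 ((l+2)/(4 - l*m), (m+2)/(4 - l*m))).smulRight (α, β)

/-- `σ₂(λ,μ) = (λ,μ) + λ·(−2,l)`. -/
def sigma2 (l : K) : Module.End K (K × K) :=
  LinearMap.id + (LinearMap.fst K K K).smulRight ((-2 : K), l)

/-- `σ₃(λ,μ) = (λ,μ) + μ·(m,−2)`. -/
def sigma3 (m : K) : Module.End K (K × K) :=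
  LinearMap.id + (LinearMap.snd K K K).smulRight (m, (-2 : K))

/-- The sequence `u_x` : `u_x(0)=0, u_x(1)=u_x(2)=1, u_x(3)=x−1,
u_x(n+4) = (x−2)·u_x(n+2) − u_x(n)`. -/
def useq (x : K) : ℕ → K
  | 0 => 0
  | 1 => 1
  | 2 => 1
  | 3 => x - 1
  | (n+4) => (x - 2) * useq x (n+2) - useq x n

/-!
Every `τ(v)` is the transvection `x ↦ x + φ_v(x) • b` along `b`, where `φ_v` is the linear form
with `φ_v(a₂) = λ`, `φ_v(a₃) = μ`, `φ_v(b) = 0` (this is where `γ ≠ 4` enters). Transvections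
along a common vector compose additively, so `v ↦ τ(v)` is a homomorphism from `(K², +)`.
Each `sᵢ` is the reflection `x ↦ x - gᵢ(x) • aᵢ` with `gᵢ(aᵢ) = 2`, and `gᵢ(b) = 0`
(for `g₁` this is exactly `Δ = 0`), so `sᵢ` fixes `b` and `sᵢ τ(v) sᵢ = τ(σᵢ v)`, where
`φ_{σᵢ v} = φ_v ∘ sᵢ`. On `K²`, `σᵢ` is the reflection along `cᵢ`: `σᵢ(λcᵢ) = -λcᵢ` and
`σⱼ(λcᵢ) = λcᵢ + aᵢⱼ λcⱼ` with `a₂₁ = a₃₁ = 1`, `a₁₂ = α`, `a₁₃ = β`, `a₂₃ = l`, `a₃₂ = m`.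
Hence `τ(λcᵢ) ∈ G` gives `(sᵢ τ(λcᵢ) sᵢ)(sⱼ τ(λcᵢ) sⱼ) = τ(aᵢⱼ λcⱼ) ∈ G`.
-/

open Module LinearMap

section

variable {R V : Type*} [CommRing R] [AddCommGroup V] [Module R V]

theorem Module.preReflection_mul_transvection_mul_preReflection {x v : V} {g f : Dual R V}
    (hgx : g x = 2) (hgv : g v = 0) :
    preReflection x g * transvection f v * preReflection x g =
      transvection (f ∘ₗ preReflection x g) v := by
  ext y
  have hv : preReflection x g v = v := by simp [preReflection_apply, hgv]
  simp [Module.End.mul_apply, transvection.apply, hv, involutive_preReflection hgx y]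

end

section

omit [CharZero K]

variable {α β l m : K}

def tauForm (l m : K) (v : K × K) : Dual K (Fin 3 → K) :=
  lf ![-(v.1 * (l + 2) + v.2 * (m + 2)) / (4 - l * m), v.1, v.2]

theorem lf_apply (c x : Fin 3 → K) : lf c x = c 0 * x 0 + c 1 * x 1 + c 2 * x 2 := rfl

theorem tauForm_apply (v : K × K) (x : Fin 3 → K) :
    tauForm l m v x = -(v.1 * (l + 2) + v.2 * (m + 2)) / (4 - l * m) * x 0 + v.1 * x 1 + v.2 * x 2 :=
  rfl

theorem tauv_eq_transvection (v : K × K) :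
    tauv l m v = transvection (tauForm l m v) (bvec l m) :=
  LinearMap.ext fun _ => rfl

theorem tauForm_add (v w : K × K) : tauForm l m (v + w) = tauForm l m v + tauForm l m w := by
  refine LinearMap.ext fun x => ?_
  simp only [LinearMap.add_apply, tauForm_apply, Prod.fst_add, Prod.snd_add]
  ring

theorem tauForm_apply_bvec (hγ : l * m ≠ 4) (v : K × K) : tauForm l m v (bvec l m) = 0 := by
  change -(v.1 * (l + 2) + v.2 * (m + 2)) / (4 - l * m) * (4 - l * m) + v.1 * (l + 2)
    + v.2 * (m + 2) = 0
  rw [div_mul_cancel₀ _ (sub_ne_zero.mpr hγ.symm)]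
  ring

theorem tauv_add (hγ : l * m ≠ 4) (v w : K × K) : tauv l m (v + w) = tauv l m v * tauv l m w := by
  simp only [tauv_eq_transvection, tauForm_add, Module.End.mul_eq_comp,
    transvection.comp_of_right_eq (tauForm_apply_bvec hγ v)]

theorem s1_eq_preReflection : s1 α β = preReflection (Pi.single 0 1) (lf ![2, -α, -β]) := rfl
theorem s2_eq_preReflection : s2 l = preReflection (Pi.single 1 1) (lf ![-1, 2, -l]) := rfl
theorem s3_eq_preReflection : s3 m = preReflection (Pi.single 2 1) (lf ![-1, -m, 2]) := rfl

theorem sigma1_apply (v : K × K) :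
    sigma1 α β l m v = v - ((v.1 * (l + 2) + v.2 * (m + 2)) / (4 - l * m)) • c1 α β := by
  change v - lf2 _ v • (α, β) = _
  congr 2
  simp only [lf2, LinearMap.add_apply, LinearMap.smul_apply, fst_apply, snd_apply, smul_eq_mul]
  ring

theorem sigma2_apply (v : K × K) : sigma2 l v = v + v.1 • c2 l := rfl

theorem sigma3_apply (v : K × K) : sigma3 m v = v + v.2 • c3 m := rfl

theorem tauForm_single_zero (v : K × K) :
    tauForm l m v (Pi.single 0 1) = -(v.1 * (l + 2) + v.2 * (m + 2)) / (4 - l * m) := by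
  simp [tauForm_apply]

theorem tauForm_single_one (v : K × K) : tauForm l m v (Pi.single 1 1) = v.1 := by
  simp [tauForm_apply]

theorem tauForm_single_two (v : K × K) : tauForm l m v (Pi.single 2 1) = v.2 := by
  simp [tauForm_apply]

theorem tauForm_comp_s1 (hΔ : 8 - 2*α - 2*β - 2*(l*m) - (α*l + β*m) = 0) (hγ : l * m ≠ 4)
    (v : K × K) : tauForm l m v ∘ₗ s1 α β = tauForm l m (sigma1 α β l m v) := by
  refine LinearMap.ext fun x => ?_
  rw [comp_apply, s1_eq_preReflection, preReflection_apply, map_sub, map_smul, tauForm_single_zero,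
    sigma1_apply]
  simp only [tauForm_apply, lf_apply, Matrix.cons_val, smul_eq_mul, c1, Prod.smul_mk,
    Prod.fst_sub, Prod.snd_sub]
  field_simp [sub_ne_zero.mpr hγ.symm]
  linear_combination x 0 * (v.1 * (l + 2) + v.2 * (m + 2)) * hΔ

theorem tauForm_comp_s2 (hγ : l * m ≠ 4) (v : K × K) :
    tauForm l m v ∘ₗ s2 l = tauForm l m (sigma2 l v) := by
  refine LinearMap.ext fun x => ?_
  rw [comp_apply, s2_eq_preReflection, preReflection_apply, map_sub, map_smul, tauForm_single_one,
    sigma2_apply]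
  simp only [tauForm_apply, lf_apply, Matrix.cons_val, smul_eq_mul, c2, Prod.smul_mk,
    Prod.fst_add, Prod.snd_add]
  field_simp [sub_ne_zero.mpr hγ.symm]
  ring

theorem tauForm_comp_s3 (hγ : l * m ≠ 4) (v : K × K) :
    tauForm l m v ∘ₗ s3 m = tauForm l m (sigma3 m v) := by
  refine LinearMap.ext fun x => ?_
  rw [comp_apply, s3_eq_preReflection, preReflection_apply, map_sub, map_smul, tauForm_single_two,
    sigma3_apply]
  simp only [tauForm_apply, lf_apply, Matrix.cons_val, smul_eq_mul, c3, Prod.smul_mk,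
    Prod.fst_add, Prod.snd_add]
  field_simp [sub_ne_zero.mpr hγ.symm]
  ring

theorem s1_mul_tauv_mul_s1 (hΔ : 8 - 2*α - 2*β - 2*(l*m) - (α*l + β*m) = 0) (hγ : l * m ≠ 4)
    (v : K × K) : s1 α β * tauv l m v * s1 α β = tauv l m (sigma1 α β l m v) := by
  rw [tauv_eq_transvection, tauv_eq_transvection, ← tauForm_comp_s1 hΔ hγ, s1_eq_preReflection]
  refine preReflection_mul_transvection_mul_preReflection (by simp [lf_apply]) ?_
  simp only [lf_apply, bvec, Matrix.cons_val]
  linear_combination hΔ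

theorem s2_mul_tauv_mul_s2 (hγ : l * m ≠ 4) (v : K × K) :
    s2 l * tauv l m v * s2 l = tauv l m (sigma2 l v) := by
  rw [tauv_eq_transvection, tauv_eq_transvection, ← tauForm_comp_s2 hγ, s2_eq_preReflection]
  refine preReflection_mul_transvection_mul_preReflection (by simp [lf_apply]) ?_
  simp only [lf_apply, bvec, Matrix.cons_val]
  ring

theorem s3_mul_tauv_mul_s3 (hγ : l * m ≠ 4) (v : K × K) :
    s3 m * tauv l m v * s3 m = tauv l m (sigma3 m v) := by
  rw [tauv_eq_transvection, tauv_eq_transvection, ← tauForm_comp_s3 hγ, s3_eq_preReflection]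
  refine preReflection_mul_transvection_mul_preReflection (by simp [lf_apply]) ?_
  simp only [lf_apply, bvec, Matrix.cons_val]
  ring

theorem tauv_sigma_mem (hΔ : 8 - 2*α - 2*β - 2*(l*m) - (α*l + β*m) = 0) (hγ : l * m ≠ 4)
    {v : K × K} (hv : tauv l m v ∈ Submonoid.closure {s1 α β, s2 l, s3 m}) :
    tauv l m (sigma1 α β l m v) ∈ Submonoid.closure {s1 α β, s2 l, s3 m} ∧
      tauv l m (sigma2 l v) ∈ Submonoid.closure {s1 α β, s2 l, s3 m} ∧
      tauv l m (sigma3 m v) ∈ Submonoid.closure {s1 α β, s2 l, s3 m} := by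
  have conj_mem {s} (hs : s ∈ ({s1 α β, s2 l, s3 m} : Set _)) :
      s * tauv l m v * s ∈ Submonoid.closure {s1 α β, s2 l, s3 m} :=
    mul_mem (mul_mem (Submonoid.subset_closure hs) hv) (Submonoid.subset_closure hs)
  rw [← s1_mul_tauv_mul_s1 hΔ hγ, ← s2_mul_tauv_mul_s2 hγ, ← s3_mul_tauv_mul_s3 hγ]
  exact ⟨conj_mem (by simp), conj_mem (by simp), conj_mem (by simp)⟩

variable (lam : K)

theorem sigma1_smul_c1 (hΔ : 8 - 2*α - 2*β - 2*(l*m) - (α*l + β*m) = 0) (hγ : l * m ≠ 4) :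
    sigma1 α β l m (lam • c1 α β) = -(lam • c1 α β) := by
  rw [sigma1_apply, show ((lam • c1 α β).1 * (l + 2) + (lam • c1 α β).2 * (m + 2)) / (4 - l * m)
      = 2 * lam by
    simp only [c1, Prod.smul_mk, smul_eq_mul]
    rw [div_eq_iff (sub_ne_zero.mpr hγ.symm)]
    linear_combination -lam * hΔ]
  module

theorem sigma1_smul_c2 (hγ : l * m ≠ 4) :
    sigma1 α β l m (lam • c2 l) = lam • c2 l + lam • c1 α β := by
  rw [sigma1_apply, show ((lam • c2 l).1 * (l + 2) + (lam • c2 l).2 * (m + 2)) / (4 - l * m)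
      = -lam by
    simp only [c2, Prod.smul_mk, smul_eq_mul]
    rw [div_eq_iff (sub_ne_zero.mpr hγ.symm)]
    ring]
  module

theorem sigma1_smul_c3 (hγ : l * m ≠ 4) :
    sigma1 α β l m (lam • c3 m) = lam • c3 m + lam • c1 α β := by
  rw [sigma1_apply, show ((lam • c3 m).1 * (l + 2) + (lam • c3 m).2 * (m + 2)) / (4 - l * m)
      = -lam by
    simp only [c3, Prod.smul_mk, smul_eq_mul]
    rw [div_eq_iff (sub_ne_zero.mpr hγ.symm)]
    ring]
  module

theorem sigma2_smul_c2 : sigma2 l (lam • c2 l) = -(lam • c2 l) := by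
  rw [sigma2_apply, show (lam • c2 l).1 = -2 * lam by simp [c2, mul_comm]]
  module

theorem sigma3_smul_c3 : sigma3 m (lam • c3 m) = -(lam • c3 m) := by
  rw [sigma3_apply, show (lam • c3 m).2 = -2 * lam by simp [c3, mul_comm]]
  module

theorem sigma2_smul_c1 : sigma2 l (lam • c1 α β) = lam • c1 α β + (α * lam) • c2 l := by
  rw [sigma2_apply, show (lam • c1 α β).1 = α * lam by simp [c1, mul_comm]]

theorem sigma3_smul_c1 : sigma3 m (lam • c1 α β) = lam • c1 α β + (β * lam) • c3 m := by
  rw [sigma3_apply, show (lam • c1 α β).2 = β * lam by simp [c1, mul_comm]]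

theorem sigma2_smul_c3 : sigma2 l (lam • c3 m) = lam • c3 m + (m * lam) • c2 l := by
  rw [sigma2_apply, show (lam • c3 m).1 = m * lam by simp [c3, mul_comm]]

theorem sigma3_smul_c2 : sigma3 m (lam • c2 l) = lam • c2 l + (l * lam) • c3 m := by
  rw [sigma3_apply, show (lam • c2 l).2 = l * lam by simp [c2, mul_comm]]

end

/-- with `Δ = 0`, `γ ≠ 4`, and `G` the group generated by `s₁,s₂,s₃`:
(i) `τ(λc₂) ∈ G → τ(λc₁) ∈ G`; (ii) `τ(λc₃) ∈ G → τ(λc₁) ∈ G`;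
(iii) `τ(λc₁) ∈ G → τ(αλc₂) ∈ G ∧ τ(βλc₃) ∈ G`; (iv) `τ(λc₂) ∈ G → τ(lλc₃) ∈ G`;
(v) `τ(λc₃) ∈ G → τ(mλc₂) ∈ G`. -/
theorem stmt7 (α β l m : K)
    (hΔ : 8 - 2*α - 2*β - 2*(l*m) - (α*l + β*m) = 0) (hγ : l*m ≠ 4)
    (lam : K) :
    (tauv l m (lam • c2 l) ∈ Submonoid.closure {s1 α β, s2 l, s3 m} →
      tauv l m (lam • c1 α β) ∈ Submonoid.closure {s1 α β, s2 l, s3 m}) ∧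
    (tauv l m (lam • c3 m) ∈ Submonoid.closure {s1 α β, s2 l, s3 m} →
      tauv l m (lam • c1 α β) ∈ Submonoid.closure {s1 α β, s2 l, s3 m}) ∧
    (tauv l m (lam • c1 α β) ∈ Submonoid.closure {s1 α β, s2 l, s3 m} →
      tauv l m ((α*lam) • c2 l) ∈ Submonoid.closure {s1 α β, s2 l, s3 m} ∧
      tauv l m ((β*lam) • c3 m) ∈ Submonoid.closure {s1 α β, s2 l, s3 m}) ∧
    (tauv l m (lam • c2 l) ∈ Submonoid.closure {s1 α β, s2 l, s3 m} →
      tauv l m ((l*lam) • c3 m) ∈ Submonoid.closure {s1 α β, s2 l, s3 m}) ∧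
    (tauv l m (lam • c3 m) ∈ Submonoid.closure {s1 α β, s2 l, s3 m} →
      tauv l m ((m*lam) • c2 l) ∈ Submonoid.closure {s1 α β, s2 l, s3 m}) := by
  refine ⟨fun h => ?_, fun h => ?_, fun h => ⟨?_, ?_⟩, fun h => ?_, fun h => ?_⟩ <;>
    obtain ⟨h1, h2, h3⟩ := tauv_sigma_mem hΔ hγ h
  · simpa only [← tauv_add hγ, sigma2_smul_c2, sigma1_smul_c2 lam hγ, neg_add_cancel_left]
      using mul_mem h2 h1
  · simpa only [← tauv_add hγ, sigma3_smul_c3, sigma1_smul_c3 lam hγ, neg_add_cancel_left]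
      using mul_mem h3 h1
  · simpa only [← tauv_add hγ, sigma1_smul_c1 lam hΔ hγ, sigma2_smul_c1, neg_add_cancel_left]
      using mul_mem h1 h2
  · simpa only [← tauv_add hγ, sigma1_smul_c1 lam hΔ hγ, sigma3_smul_c1, neg_add_cancel_left]
      using mul_mem h1 h3
  · simpa only [← tauv_add hγ, sigma2_smul_c2, sigma3_smul_c2, neg_add_cancel_left]
      using mul_mem h2 h3
  · simpa only [← tauv_add hγ, sigma3_smul_c3, sigma2_smul_c3, neg_add_cancel_left]
      using mul_mem h3 h2

end
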